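/- For every Mockingbird term t, the map fr is injective on the set {s : t ≼ s}: if t ≼ s, t ≼ s', and fr(s) = fr(s'), then s = s'. -/

import Mathlib

/-- Mockingbird terms: the constant `M`, variables `x i`, and applications. -/
inductive MTerm : Type
  | M : MTerm
  | var : ℕ → MTerm
  | app : MTerm → MTerm → MTerm
  deriving DecidableEq

/-- The one-step rewrite relation `⇒` on Mockingbird terms. -/
inductive Step : MTerm → MTerm → Prop
  | mock (t : MTerm) : Step (MTerm.app MTerm.M t) (MTerm.app t t)
  | left {t1 t1' : MTerm} (t2 : MTerm) :
      Step t1 t1' → Step (MTerm.app t1 t2) (MTerm.app t1' t2)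
  | right (t1 : MTerm) {t2 t2' : MTerm} :
      Step t2 t2' → Step (MTerm.app t1 t2) (MTerm.app t1 t2')

/-- `≼`, the reflexive-transitive closure of `⇒`. -/
def MLe : MTerm → MTerm → Prop := Relation.ReflTransGen Step

/-- `≡`, the reflexive-symmetric-transitive closure of `⇒`. -/
def MEquiv : MTerm → MTerm → Prop := Relation.EqvGen Step

/-- Strict version of `≼`. -/
def MLt (s t : MTerm) : Prop := MLe s t ∧ s ≠ t

/-- Covering relation for `≼`. -/
def MCovBy (s t : MTerm) : Prop := MLt s t ∧ ∀ z, MLt s z → ¬ MLt z t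

/-- Duplicative trees: white or black nodes with a list (forest) of children. -/
inductive DTree : Type
  | W : List DTree → DTree
  | B : List DTree → DTree

/-- The one-step relation `⋖` on duplicative forests. -/
inductive DStep : List DTree → List DTree → Prop
  | dup (g : List DTree) : DStep [DTree.W g] [DTree.B (g ++ g)]
  | white {g g' : List DTree} : DStep g g' → DStep [DTree.W g] [DTree.W g']
  | black {g g' : List DTree} : DStep g g' → DStep [DTree.B g] [DTree.B g']
  | head {t t' : DTree} (f : List DTree) : DStep [t] [t'] → DStep (t :: f) (t' :: f)
  | tail (t : DTree) {f f' : List DTree} : DStep f f' → DStep (t :: f) (t :: f')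

/-- `≪`, the reflexive-transitive closure of `⋖`. -/
def DLe : List DTree → List DTree → Prop := Relation.ReflTransGen DStep

/-- The map `fr` from Mockingbird terms to duplicative forests. -/
def fr : MTerm → List DTree
  | MTerm.M => []
  | MTerm.var _ => []
  | MTerm.app MTerm.M MTerm.M => [DTree.B []]
  | MTerm.app MTerm.M t' => [DTree.W (fr t')]
  | MTerm.app t t' => [DTree.B (fr t ++ fr t')]

mutual
  /-- The pruning map on duplicative trees (returns a forest). -/
  def prT : DTree → List DTree
    | DTree.W g => [DTree.W (prF g)]
    | DTree.B g => prF g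
  /-- The pruning map on duplicative forests. -/
  def prF : List DTree → List DTree
    | [] => []
    | t :: f => prT t ++ prF f
end

mutual
  /-- The statistic `mtStat` on duplicative trees. -/
  def mtStat : DTree → ℕ
    | DTree.W g => 2 * ml g
    | DTree.B g => ml g
  /-- Sum of `mtStat` over the trees of a forest. -/
  def mtsum : List DTree → ℕ
    | [] => 0
    | t :: f => mtStat t + mtsum f
  /-- The statistic `ml` on duplicative forests: `1 - ℓ + Σ mtStat`. -/
  def ml : List DTree → ℕ
    | f => mtsum f + 1 - f.length
end

mutual
  /-- Number of white nodes in a duplicative tree. -/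
  def whitesT : DTree → ℕ
    | DTree.W g => 1 + whitesF g
    | DTree.B g => whitesF g
  /-- Number of white nodes in a duplicative forest. -/
  def whitesF : List DTree → ℕ
    | [] => 0
    | t :: f => whitesT t + whitesF f
end

/-- Closed terms: no variables. -/
def MClosed : MTerm → Prop
  | MTerm.M => True
  | MTerm.var _ => False
  | MTerm.app a b => MClosed a ∧ MClosed b

/-- Degree: number of applications. -/
def deg : MTerm → ℕ
  | MTerm.M => 0
  | MTerm.var _ => 0
  | MTerm.app a b => deg a + deg b + 1

/-- Subterm relation. -/
inductive Subterm : MTerm → MTerm → Prop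
  | refl (t : MTerm) : Subterm t t
  | left {s a : MTerm} (b : MTerm) : Subterm s a → Subterm s (MTerm.app a b)
  | right (a : MTerm) {s b : MTerm} : Subterm s b → Subterm s (MTerm.app a b)

/-- The term `r_d`. -/
def rTerm : ℕ → MTerm
  | 0 => MTerm.M
  | d + 1 => MTerm.app MTerm.M (rTerm d)

/-- Saturated chain from `a` to `b`, given as the list of its elements. -/
def SatChain (a b : MTerm) (c : List MTerm) : Prop :=
  List.Chain' MCovBy c ∧ c.head? = some a ∧ c.getLast? = some b


/-!
Rewriting preserves the shape of a term's head: an application `a ⋆ b` with `a ≠ M` only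
rewrites inside `a` and `b`, while `M ⋆ b` either rewrites inside `b` (and `fr` colours it
white) or is duplicated to some `b' ⋆ b'` with `b ≼ b'` and rewritten from there (and `fr`
colours it black). So two terms above a common `t` with the same image under `fr` have the
same head shape, their immediate subterms lie above common terms, and the children forests
split at the same place because the length of `fr` is invariant under rewriting. Induction on
the term finishes the proof.
-/

open MTerm

lemma length_fr_app (c d : MTerm) : (fr (app c d)).length = 1 := by
  cases c <;> cases d <;> rfl

lemma fr_M_app {d : MTerm} (hd : d ≠ M) : fr (app M d) = [DTree.W (fr d)] := by
  cases d
  · exact absurd rfl hd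
  all_goals rfl

lemma fr_app_of_ne_M {c : MTerm} (d : MTerm) (hc : c ≠ M) :
    fr (app c d) = [DTree.B (fr c ++ fr d)] := by
  cases c
  · exact absurd rfl hc
  all_goals rfl

lemma Step.length_fr_eq {u v : MTerm} (h : Step u v) : (fr v).length = (fr u).length := by
  cases h <;> simp only [length_fr_app]

lemma MLe.length_fr_eq {u v : MTerm} (h : MLe u v) : (fr v).length = (fr u).length := by
  induction h with
  | refl => rfl
  | tail _ hstep ih => exact hstep.length_fr_eq.trans ih

lemma MLe.eq_of_fr_eq_nil {t s : MTerm} (h : MLe t s) (ht : fr t = []) : s = t := by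
  rcases h.cases_head with rfl | ⟨u, hstep, _⟩
  · rfl
  · cases hstep <;> simpa [length_fr_app] using congrArg List.length ht

lemma MLe.ne_M {a c : MTerm} (h : MLe a c) (ha : a ≠ M) : c ≠ M := by
  rintro rfl
  refine ha (h.eq_of_fr_eq_nil ?_).symm
  exact List.eq_nil_of_length_eq_zero h.length_fr_eq.symm

lemma exists_eq_app_of_app_le {a b s : MTerm} (h : MLe (app a b) s) (ha : a ≠ M) :
    ∃ c d, s = app c d ∧ MLe a c ∧ MLe b d ∧ fr s = [DTree.B (fr c ++ fr d)] := by
  induction h with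
  | refl => exact ⟨a, b, rfl, .refl, .refl, fr_app_of_ne_M b ha⟩
  | tail _ hstep ih =>
    obtain ⟨c, d, rfl, hc, hd, -⟩ := ih
    cases hstep with
    | mock => exact absurd rfl (hc.ne_M ha)
    | left _ hstep =>
      have hc' : MLe a _ := hc.tail hstep
      exact ⟨_, d, rfl, hc', hd, fr_app_of_ne_M d (hc'.ne_M ha)⟩
    | right _ hstep => exact ⟨c, _, rfl, hc, hd.tail hstep, fr_app_of_ne_M _ (hc.ne_M ha)⟩

lemma exists_eq_app_of_app_M_le {b s : MTerm} (h : MLe (app M b) s) :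
    (∃ d, s = app M d ∧ MLe b d) ∨ ∃ c d, s = app c d ∧ MLe b c ∧ MLe b d := by
  induction h with
  | refl => exact .inl ⟨b, rfl, .refl⟩
  | tail _ hstep ih =>
    rcases ih with ⟨d, rfl, hd⟩ | ⟨c, d, rfl, hc, hd⟩
    · cases hstep with
      | mock => exact .inr ⟨d, d, rfl, hd, hd⟩
      | left _ hstep => cases hstep
      | right _ hstep => exact .inl ⟨_, rfl, hd.tail hstep⟩
    · cases hstep with
      | mock => exact .inr ⟨d, d, rfl, hd, hd⟩
      | left _ hstep => exact .inr ⟨_, d, rfl, hc.tail hstep, hd⟩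
      | right _ hstep => exact .inr ⟨c, _, rfl, hc, hd.tail hstep⟩

lemma eq_app_M_M_of_le {s : MTerm} (h : MLe (app M M) s) : s = app M M := by
  rcases exists_eq_app_of_app_M_le h with ⟨d, rfl, hd⟩ | ⟨c, d, rfl, hc, hd⟩
  · rw [hd.eq_of_fr_eq_nil rfl]
  · rw [hc.eq_of_fr_eq_nil rfl, hd.eq_of_fr_eq_nil rfl]

lemma exists_fr_eq_of_app_M_le {b s : MTerm} (h : MLe (app M b) s) (hb : b ≠ M) :
    (∃ d, s = app M d ∧ MLe b d ∧ fr s = [DTree.W (fr d)]) ∨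
      ∃ c d, s = app c d ∧ MLe b c ∧ MLe b d ∧ fr s = [DTree.B (fr c ++ fr d)] := by
  rcases exists_eq_app_of_app_M_le h with ⟨d, rfl, hd⟩ | ⟨c, d, rfl, hc, hd⟩
  · exact .inl ⟨d, rfl, hd, fr_M_app (hd.ne_M hb)⟩
  · exact .inr ⟨c, d, rfl, hc, hd, fr_app_of_ne_M d (hc.ne_M hb)⟩

def FrInjAt (s : MTerm) : Prop :=
  ∀ t s', MLe t s → MLe t s' → fr s = fr s' → s = s'

lemma FrInjAt.of_fr_eq_nil {s : MTerm} (hs : fr s = []) : FrInjAt s := by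
  intro t s' ht ht' _
  have hft : fr t = [] := List.eq_nil_of_length_eq_zero (by rw [← ht.length_fr_eq, hs]; rfl)
  rw [ht.eq_of_fr_eq_nil hft, ht'.eq_of_fr_eq_nil hft]

lemma FrInjAt.app_eq_app {x y c₁ d₁ c₂ d₂ : MTerm}
    (hc₁ : FrInjAt c₁) (hd₁ : FrInjAt d₁) (hx₁ : MLe x c₁) (hx₂ : MLe x c₂)
    (hy₁ : MLe y d₁) (hy₂ : MLe y d₂)
    (h : fr c₁ ++ fr d₁ = fr c₂ ++ fr d₂) : app c₁ d₁ = app c₂ d₂ := by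
  obtain ⟨hc, hd⟩ := List.append_inj h (hx₁.length_fr_eq.trans hx₂.length_fr_eq.symm)
  rw [hc₁ x c₂ hx₁ hx₂ hc, hd₁ y d₂ hy₁ hy₂ hd]

lemma FrInjAt.app {c d : MTerm} (hc : FrInjAt c) (hd : FrInjAt d) : FrInjAt (app c d) := by
  intro t s' hs hs' h
  rcases t with _ | _ | ⟨a, b⟩
  · cases hs.eq_of_fr_eq_nil rfl
  · cases hs.eq_of_fr_eq_nil rfl
  by_cases ha : a = M
  · subst ha
    by_cases hb : b = M
    · subst hb
      rw [eq_app_M_M_of_le hs, eq_app_M_M_of_le hs']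
    rcases exists_fr_eq_of_app_M_le hs hb with
      ⟨d₁, hs_eq, hd₁, hfr₁⟩ | ⟨c₁, d₁, hs_eq, hc₁, hd₁, hfr₁⟩ <;>
    rcases exists_fr_eq_of_app_M_le hs' hb with
      ⟨d₂, rfl, hd₂, hfr₂⟩ | ⟨c₂, d₂, rfl, hc₂, hd₂, hfr₂⟩ <;>
    cases hs_eq <;>
    simp only [hfr₁, hfr₂, List.cons.injEq, DTree.W.injEq, DTree.B.injEq, reduceCtorEq,
      and_true] at h
    · rw [hd b d₂ hd₁ hd₂ h]
    · exact hc.app_eq_app hd hc₁ hc₂ hd₁ hd₂ h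
  · obtain ⟨c₁, d₁, hs_eq, hc₁, hd₁, hfr₁⟩ := exists_eq_app_of_app_le hs ha
    obtain ⟨c₂, d₂, rfl, hc₂, hd₂, hfr₂⟩ := exists_eq_app_of_app_le hs' ha
    cases hs_eq
    simp only [hfr₁, hfr₂, List.cons.injEq, DTree.B.injEq, and_true] at h
    exact hc.app_eq_app hd hc₁ hc₂ hd₁ hd₂ h

lemma frInjAt : ∀ s, FrInjAt s
  | M => .of_fr_eq_nil rfl
  | var _ => .of_fr_eq_nil rfl
  | app c d => (frInjAt c).app (frInjAt d)

/-- `fr` is injective on `{s : t ≼ s}`. -/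
theorem fr_injective_on_upset (t s s' : MTerm)
    (hs : MLe t s) (hs' : MLe t s') (h : fr s = fr s') : s = s' :=
  frInjAt s t s' hs hs' h
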